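/- For the price-anticipating aggregator minimising a strictly convex increasing cost C applied hourly to total demand, ∑_h C(P_L(h) + P_F(h)), subject to ∑_h P_F(h) = E_tot and P_F(h) ≥ 0, any optimal solution makes the total demand P_L(h) + P_F(h) as flat as possible: if P_F(h1) > 0 and P_L(h1)+P_F(h1) > P_L(h2)+P_F(h2), the solution is not optimal. -/

import Mathlib

/-! Shifting a small amount `ε ≤ P_F h1` of flexible load from the hour `h1` to the strictly
less loaded hour `h2` keeps the profile feasible, and by strict convexity of `C` it strictly
lowers `C (total h1) + C (total h2)`, as long as `ε` is less than the gap between the two totals. -/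

open Finset

section Transfer

variable {ι M : Type*} [DecidableEq ι] [AddCommGroup M]

def transfer (x : ι → M) (i j : ι) (ε : M) : ι → M :=
  x - Pi.single i ε + Pi.single j ε

lemma transfer_apply_left {x : ι → M} {i j : ι} (hij : i ≠ j) (ε : M) :
    transfer x i j ε i = x i - ε := by
  simp [transfer, hij]

lemma transfer_apply_right {x : ι → M} {i j : ι} (hij : i ≠ j) (ε : M) :
    transfer x i j ε j = x j + ε := by
  simp [transfer, hij.symm]

lemma transfer_apply_of_ne {x : ι → M} {i j k : ι} (hi : k ≠ i) (hj : k ≠ j) (ε : M) :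
    transfer x i j ε k = x k := by
  simp [transfer, hi, hj]

lemma add_transfer (y x : ι → M) (i j : ι) (ε : M) :
    y + transfer x i j ε = transfer (y + x) i j ε := by
  simp only [transfer]; abel

lemma sum_transfer [Fintype ι] (x : ι → M) (i j : ι) (ε : M) :
    ∑ k, transfer x i j ε k = ∑ k, x k := by
  simp [transfer, sum_add_distrib, sum_sub_distrib]

lemma transfer_nonneg [PartialOrder M] [IsOrderedAddMonoid M] {x : ι → M} {i j : ι}
    (hx : ∀ k, 0 ≤ x k) {ε : M} (hε : 0 ≤ ε) (hεi : ε ≤ x i) (k : ι) :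
    0 ≤ transfer x i j ε k := by
  simp only [transfer, Pi.add_apply, Pi.sub_apply, Pi.single_apply]
  split_ifs with hki hkj
  · subst hki hkj; simpa using hx k
  · subst hki; simpa using hεi
  · simpa using add_nonneg (hx k) hε
  · simpa using hx k

end Transfer

lemma StrictConvexOn.map_add_add_map_sub_lt {s : Set ℝ} {f : ℝ → ℝ}
    (hf : StrictConvexOn ℝ s f) {a b ε : ℝ} (hb : b ∈ s) (ha : a ∈ s)
    (hε : 0 < ε) (hεab : ε < a - b) :
    f (b + ε) + f (a - ε) < f b + f a := by
  have hab : 0 < a - b := hε.trans hεab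
  set t := ε / (a - b)
  have ht : 0 < t := div_pos hε hab
  have ht1 : t < 1 := (div_lt_one hab).2 hεab
  have htε : t * (a - b) = ε := div_mul_cancel₀ ε hab.ne'
  have hlow := hf.2 hb ha (by linarith) (sub_pos.2 ht1) ht (by ring)
  have hhigh := hf.2 hb ha (by linarith) ht (sub_pos.2 ht1) (by ring)
  simp only [smul_eq_mul] at hlow hhigh
  rw [show (1 - t) * b + t * a = b + ε by rw [← htε]; ring] at hlow
  rw [show t * b + (1 - t) * a = a - ε by rw [← htε]; ring] at hhigh
  linarith

lemma StrictConvexOn.sum_comp_transfer_lt {ι : Type*} [Fintype ι] [DecidableEq ι]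
    {s : Set ℝ} {f : ℝ → ℝ} (hf : StrictConvexOn ℝ s f) {x : ι → ℝ} {i j : ι}
    (hi : x i ∈ s) (hj : x j ∈ s) {ε : ℝ} (hε : 0 < ε) (hεij : ε < x i - x j) :
    ∑ k, f (transfer x i j ε k) < ∑ k, f (x k) := by
  have hij : i ≠ j := by rintro rfl; rw [sub_self] at hεij; linarith
  have hdiff : ∑ k, (f (transfer x i j ε k) - f (x k))
      = (f (x i - ε) - f (x i)) + (f (x j + ε) - f (x j)) := by
    rw [Fintype.sum_eq_add i j hij fun k hk => by
      rw [transfer_apply_of_ne hk.1 hk.2, sub_self]]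
    rw [transfer_apply_left hij, transfer_apply_right hij]
  have := hf.map_add_add_map_sub_lt hj hi hε hεij
  rw [sum_sub_distrib] at hdiff
  linarith

theorem stmt_13_general (H : ℕ) (P_L : Fin H → ℝ) (E_tot : ℝ)
    (C : ℝ → ℝ) (hC : StrictConvexOn ℝ Set.univ C)
    (P_F : Fin H → ℝ)
    (hfeas : (∀ h, 0 ≤ P_F h) ∧ ∑ h, P_F h = E_tot)
    (h1 h2 : Fin H)
    (hpos : 0 < P_F h1)
    (hgt : P_L h2 + P_F h2 < P_L h1 + P_F h1) :
    ¬ (∀ Q : Fin H → ℝ, ((∀ h, 0 ≤ Q h) ∧ ∑ h, Q h = E_tot) →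
        ∑ h, C (P_L h + P_F h) ≤ ∑ h, C (P_L h + Q h)) := by
  intro hopt
  set ε := min (P_F h1) ((P_L h1 + P_F h1 - (P_L h2 + P_F h2)) / 2)
  have hε : 0 < ε := lt_min hpos (by linarith)
  have hεgap : ε < (P_L + P_F) h1 - (P_L + P_F) h2 :=
    (min_le_right _ _).trans_lt (by simp only [Pi.add_apply]; linarith)
  have hfeasQ : (∀ h, 0 ≤ transfer P_F h1 h2 ε h) ∧ ∑ h, transfer P_F h1 h2 ε h = E_tot :=
    ⟨transfer_nonneg hfeas.1 hε.le (min_le_left _ _), (sum_transfer _ _ _ _).trans hfeas.2⟩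
  have hlt := hC.sum_comp_transfer_lt (Set.mem_univ _) (Set.mem_univ _) hε hεgap
  rw [← add_transfer] at hlt
  exact (hopt _ hfeasQ).not_gt hlt

theorem stmt_13 (H : ℕ) (P_L : Fin H → ℝ) (E_tot : ℝ) (hE : 0 ≤ E_tot)
    (C : ℝ → ℝ) (hC : StrictConvexOn ℝ Set.univ C)
    (P_F : Fin H → ℝ)
    (hfeas : (∀ h, 0 ≤ P_F h) ∧ ∑ h, P_F h = E_tot)
    (h1 h2 : Fin H)
    (hpos : 0 < P_F h1)
    (hgt : P_L h2 + P_F h2 < P_L h1 + P_F h1) :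
    ¬ (∀ Q : Fin H → ℝ, ((∀ h, 0 ≤ Q h) ∧ ∑ h, Q h = E_tot) →
        ∑ h, C (P_L h + P_F h) ≤ ∑ h, C (P_L h + Q h)) :=
  stmt_13_general H P_L E_tot C hC P_F hfeas h1 h2 hpos hgt
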